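/- Let R be a nonnegative integer vector in ℤ^n with each component at most n. There exists an n×n (0,1)-matrix with row sum vector R and column sum vector R that is invariant under both matrix transposition and transposition about the antidiagonal if and only if there exists an n×n (0,1)-matrix with row sum vector R and column sum vector R that is invariant under ρ_π (rotation through π radians). -/

import Mathlib

/-
Symmetry under both transpositions implies invariance under their composite `ρ_π`, which gives
the forward direction.

Conversely, fold a centrosymmetric (0,1)-matrix `A` onto the orbits `{i, rev i}` of `rev`. The
folded matrix has equal row and column sums and its entries are bounded by a symmetric capacity:
2 between two pairs, 1 between a pair and the centre, 0 at the centre. Such a matrix can be made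
symmetric without changing its row sums or exceeding the capacity. While it is asymmetric, the
digraph of strictly asymmetric pairs has in-degree equal to out-degree at every vertex, so it
contains a cycle. Going around the cycle, alternately raise the smaller entry of a pair and lower
the larger one. An odd cycle is first closed up by a loop at a vertex with positive diagonal
capacity. Each such switch strictly decreases the asymmetry. Unfolding the resulting symmetric
matrix gives a (0,1)-matrix that is invariant under both transpositions.
-/

open Finset Function

namespace KleinSymmetric

section Asymmetry

variable {V : Type*} [Fintype V] {Z : Matrix V V ℕ}

def asymmetry (Z : Matrix V V ℕ) : ℕ := ∑ p : V × V, (Z p.1 p.2 - Z p.2 p.1)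

lemma isSymm_of_asymmetry_eq_zero (h : asymmetry Z = 0) : Z.IsSymm := by
  refine Matrix.IsSymm.ext fun x y => ?_
  have hxy := sum_eq_zero_iff.1 h (x, y) (mem_univ _)
  have hyx := sum_eq_zero_iff.1 h (y, x) (mem_univ _)
  dsimp only at hxy hyx
  omega

lemma exists_lt_of_asymmetry_ne_zero (h : asymmetry Z ≠ 0) : ∃ x y, Z y x < Z x y := by
  by_contra! hle
  exact h (sum_eq_zero fun p _ => Nat.sub_eq_zero_of_le (hle p.1 p.2))

lemma exists_lt_of_lt_of_rowSum_eq_colSum {x u : V} (hx : ∑ y, Z x y = ∑ y, Z y x)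
    (hu : Z x u < Z u x) : ∃ y, Z y x < Z x y := by
  by_contra! h
  exact (sum_lt_sum (fun y _ => h y) ⟨u, mem_univ u, hu⟩).ne hx

end Asymmetry

section Fiberwise

variable {V ι : Type*} [Fintype V] [DecidableEq V] [Fintype ι]

lemma sum_card_filter_and_eq (P : ι → Prop) [DecidablePred P] (f : ι → V) :
    ∑ y, #{t | P t ∧ f t = y} = #{t | P t} := by
  rw [card_eq_sum_card_fiberwise (f := f) (t := univ) (fun _ _ => mem_univ _)]
  simp only [filter_filter]

lemma sum_card_filter_and_and_eq (P : ι → Prop) [DecidablePred P] (f g : ι → V) (y : V) :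
    ∑ x, #{t | (P t ∧ f t = x) ∧ g t = y} = #{t | P t ∧ g t = y} := by
  rw [← sum_card_filter_and_eq _ f]
  refine sum_congr rfl fun x _ => congrArg card (filter_congr fun t _ => ?_)
  tauto

end Fiberwise

section Switch

variable {V ι : Type*} [DecidableEq V] [Fintype ι] (w : ι → V) (s : Equiv.Perm ι)
  (col : ι → Bool)

def raiseCount (x y : V) : ℕ := #{t | col t ∧ w (s t) = x ∧ w t = y}

def lowerCount (x y : V) : ℕ := #{t | col t = false ∧ w t = x ∧ w (s t) = y}

/-- Each step `t` of the closed walk `w` (successor `s`) raises the entry against it if `col t`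
and lowers the entry along it otherwise. When the colours alternate, every vertex gains one unit
and loses one unit in its row, and likewise in its column. -/
def switch (Z : Matrix V V ℕ) : Matrix V V ℕ :=
  fun x y => Z x y + raiseCount w s col x y - lowerCount w s col x y

lemma lowerCount_add_raiseCount (x y : V) :
    lowerCount w s col x y + raiseCount w s col y x = #{t | w t = x ∧ w (s t) = y} := by
  rw [← card_filter_add_card_filter_not (fun t => col t = false)]
  simp only [lowerCount, raiseCount, filter_filter, Bool.not_eq_false]
  congr 2 <;> ext t <;> simp only [mem_filter, mem_univ, true_and] <;> tauto

lemma exists_of_raiseCount_pos {x y : V} (h : 0 < raiseCount w s col x y) :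
    ∃ t, col t = true ∧ w (s t) = x ∧ w t = y := by
  obtain ⟨t, ht⟩ := card_pos.1 h
  exact ⟨t, by simpa using ht⟩

lemma exists_of_lowerCount_pos {x y : V} (h : 0 < lowerCount w s col x y) :
    ∃ t, col t = false ∧ w t = x ∧ w (s t) = y := by
  obtain ⟨t, ht⟩ := card_pos.1 h
  exact ⟨t, by simpa using ht⟩

/-- Loops are the only steps that need not be strictly asymmetric: they switch a diagonal
entry, which is how odd cycles are handled. -/
structure SwitchingWalk (Z c : Matrix V V ℕ) : Prop where
  alternating : ∀ t, col (s t) = !col t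
  injective : Injective fun t => (w t, w (s t))
  lt_of_ne : ∀ t, w t ≠ w (s t) → Z (w (s t)) (w t) < Z (w t) (w (s t))
  lt_cap_of_eq : ∀ t, w t = w (s t) → col t = true → Z (w t) (w t) < c (w t) (w t)
  pos_of_eq : ∀ t, w t = w (s t) → col t = false → 0 < Z (w t) (w t)

namespace SwitchingWalk

variable {w s col} {Z c : Matrix V V ℕ} (hw : SwitchingWalk w s col Z c)
include hw

lemma card_step_le_one (x y : V) : #{t | w t = x ∧ w (s t) = y} ≤ 1 :=
  card_le_one.2 fun a ha b hb => by
    simp only [mem_filter, mem_univ, true_and] at ha hb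
    exact hw.injective (Prod.ext (ha.1.trans hb.1.symm) (ha.2.trans hb.2.symm))

lemma lowerCount_add_raiseCount_le_one (x y : V) :
    lowerCount w s col x y + raiseCount w s col y x ≤ 1 :=
  (lowerCount_add_raiseCount w s col x y).trans_le (hw.card_step_le_one x y)

lemma lt_of_raiseCount_pos {x y : V} (hxy : x ≠ y) (h : 0 < raiseCount w s col x y) :
    Z x y < Z y x := by
  obtain ⟨t, -, rfl, rfl⟩ := exists_of_raiseCount_pos w s col h
  exact hw.lt_of_ne t hxy.symm

lemma lt_of_lowerCount_pos {x y : V} (hxy : x ≠ y) (h : 0 < lowerCount w s col x y) :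
    Z y x < Z x y := by
  obtain ⟨t, -, rfl, rfl⟩ := exists_of_lowerCount_pos w s col h
  exact hw.lt_of_ne t hxy

lemma lt_cap_of_raiseCount_pos (hc : c.IsSymm) (hZc : ∀ x y, Z x y ≤ c x y) {x y : V}
    (h : 0 < raiseCount w s col x y) : Z x y < c x y := by
  obtain ⟨t, hcol, rfl, rfl⟩ := exists_of_raiseCount_pos w s col h
  by_cases hloop : w t = w (s t)
  · rw [← hloop]
    exact hw.lt_cap_of_eq t hloop hcol
  · rw [← hc.apply]
    exact (hw.lt_of_ne t hloop).trans_le (hZc _ _)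

lemma lowerCount_le (x y : V) : lowerCount w s col x y ≤ Z x y := by
  rcases Nat.eq_zero_or_pos (lowerCount w s col x y) with h | h
  · omega
  have := hw.lowerCount_add_raiseCount_le_one x y
  by_cases hxy : x = y
  · subst hxy
    obtain ⟨t, hcol, rfl, hloop⟩ := exists_of_lowerCount_pos w s col h
    have := hw.pos_of_eq t hloop.symm hcol
    omega
  · have := hw.lt_of_lowerCount_pos hxy h
    omega

lemma switch_add_lowerCount (x y : V) :
    switch w s col Z x y + lowerCount w s col x y = Z x y + raiseCount w s col x y := by
  have := hw.lowerCount_le x y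
  unfold switch
  omega

lemma switch_le (hc : c.IsSymm) (hZc : ∀ x y, Z x y ≤ c x y) (x y : V) :
    switch w s col Z x y ≤ c x y := by
  have := hw.lowerCount_add_raiseCount_le_one y x
  have := hZc x y
  unfold switch
  rcases Nat.eq_zero_or_pos (raiseCount w s col x y) with h | h
  · omega
  · have := hw.lt_cap_of_raiseCount_pos hc hZc h
    omega

lemma switch_sub_switch_add_card {x y : V} (hxy : x ≠ y) :
    switch w s col Z x y - switch w s col Z y x + #{t | w t = x ∧ w (s t) = y} =
      Z x y - Z y x := by
  rw [← lowerCount_add_raiseCount w s col x y]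
  have := hw.switch_add_lowerCount x y
  have := hw.switch_add_lowerCount y x
  have := hw.lowerCount_add_raiseCount_le_one x y
  have := hw.lowerCount_add_raiseCount_le_one y x
  have := (Nat.eq_zero_or_pos _).imp_right (hw.lt_of_raiseCount_pos hxy)
  have := (Nat.eq_zero_or_pos _).imp_right (hw.lt_of_raiseCount_pos hxy.symm)
  have := (Nat.eq_zero_or_pos _).imp_right (hw.lt_of_lowerCount_pos hxy)
  have := (Nat.eq_zero_or_pos _).imp_right (hw.lt_of_lowerCount_pos hxy.symm)
  omega

end SwitchingWalk

variable [Fintype V]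

lemma sum_raiseCount_right (x : V) :
    ∑ y, raiseCount w s col x y = #{t | col t ∧ w (s t) = x} := by
  simp only [raiseCount, ← and_assoc, sum_card_filter_and_eq]

lemma sum_lowerCount_right (x : V) :
    ∑ y, lowerCount w s col x y = #{t | col t = false ∧ w t = x} := by
  simp only [lowerCount, ← and_assoc, sum_card_filter_and_eq]

lemma sum_raiseCount_left (y : V) :
    ∑ x, raiseCount w s col x y = #{t | col t ∧ w t = y} := by
  simp only [raiseCount, ← and_assoc, sum_card_filter_and_and_eq]

lemma sum_lowerCount_left (y : V) :
    ∑ x, lowerCount w s col x y = #{t | col t = false ∧ w (s t) = y} := by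
  simp only [lowerCount, ← and_assoc, sum_card_filter_and_and_eq]

namespace SwitchingWalk

variable {w s col} {Z c : Matrix V V ℕ} (hw : SwitchingWalk w s col Z c)
include hw

lemma sum_switch_right (x : V) : ∑ y, switch w s col Z x y = ∑ y, Z x y := by
  have h := sum_congr rfl fun y (_ : y ∈ univ) => hw.switch_add_lowerCount x y
  have hcard : #{t | col t ∧ w (s t) = x} = #{t | col t = false ∧ w t = x} :=
    card_equiv s fun t => by simp [hw.alternating]
  rw [sum_add_distrib, sum_add_distrib, sum_raiseCount_right, sum_lowerCount_right, hcard] at h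
  omega

lemma sum_switch_left (y : V) : ∑ x, switch w s col Z x y = ∑ x, Z x y := by
  have h := sum_congr rfl fun x (_ : x ∈ univ) => hw.switch_add_lowerCount x y
  have hcard : #{t | col t = false ∧ w (s t) = y} = #{t | col t ∧ w t = y} :=
    card_equiv s fun t => by simp [hw.alternating]
  rw [sum_add_distrib, sum_add_distrib, sum_raiseCount_left, sum_lowerCount_left, hcard] at h
  omega

lemma asymmetry_switch_lt (h : ∃ t, w t ≠ w (s t)) :
    asymmetry (switch w s col Z) < asymmetry Z := by
  obtain ⟨t, ht⟩ := h
  refine sum_lt_sum (fun ⟨x, y⟩ _ => ?_) ⟨(w t, w (s t)), mem_univ _, ?_⟩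
  · by_cases hxy : x = y
    · simp [hxy]
    · have := hw.switch_sub_switch_add_card hxy
      dsimp only
      omega
  · have := hw.switch_sub_switch_add_card ht
    have : 0 < #{t' | w t' = w t ∧ w (s t') = w (s t)} := card_pos.2 ⟨t, by simp⟩
    dsimp only
    omega

end SwitchingWalk

end Switch

section Orbit

lemma val_finRotate {m : ℕ} (t : Fin m) : (finRotate m t : ℕ) = (t + 1) % m := by
  obtain ⟨n, rfl⟩ : ∃ n, m = n + 1 := ⟨m - 1, by have := t.pos; omega⟩
  rw [coe_finRotate]
  split_ifs with h
  · simp [h]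
  · rw [Nat.mod_eq_of_lt (by have := Fin.val_lt_last h; omega)]

lemma decide_even_finRotate {m : ℕ} (hm : Even m) (p : ℕ) (t : Fin m) :
    decide (Even ((finRotate m t : ℕ) + p)) = !decide (Even ((t : ℕ) + p)) := by
  have key : Even ((finRotate m t : ℕ) + p) ↔ ¬Even ((t : ℕ) + p) := by
    rw [val_finRotate]
    simp only [Nat.even_iff] at hm ⊢
    rcases Nat.lt_or_ge (t + 1) m with h | h
    · rw [Nat.mod_eq_of_lt h]
      omega
    · rw [show (t : ℕ) + 1 = m by omega, Nat.mod_self]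
      omega
  simp only [key, decide_not]

variable {V : Type*} {f : V → V} {y : V} {k : ℕ}

lemma iterate_finRotate (hk : k ≤ 1) (t : Fin (minimalPeriod f y + k)) :
    ((t : ℕ) < minimalPeriod f y ∧ f^[finRotate _ t] y = f (f^[t] y)) ∨
      ((t : ℕ) = minimalPeriod f y ∧ f^[t] y = y ∧ f^[finRotate _ t] y = y) := by
  have hper : f^[minimalPeriod f y] y = y := iterate_minimalPeriod
  have := t.isLt
  rw [val_finRotate]
  rcases Nat.lt_or_ge (t + 1) (minimalPeriod f y + k) with h | h
  · left
    exact ⟨by omega, by rw [Nat.mod_eq_of_lt h, iterate_succ_apply']⟩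
  rw [show (t : ℕ) + 1 = minimalPeriod f y + k by omega, Nat.mod_self, iterate_zero_apply]
  rcases Nat.lt_or_ge t (minimalPeriod f y) with ht | ht
  · left
    refine ⟨ht, ?_⟩
    rw [← iterate_succ_apply' f, Nat.succ_eq_add_one,
      show (t : ℕ) + 1 = minimalPeriod f y by omega, hper]
  · right
    have ht : (t : ℕ) = minimalPeriod f y := by omega
    exact ⟨ht, by rw [ht, hper], rfl⟩

variable {Z c : Matrix V V ℕ} {p : ℕ}

/-- The orbit of `y` as a closed walk; for `k = 1` it is followed by a loop at `y`, which turns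
an odd cycle into a walk of even length. -/
theorem switchingWalk_orbit (hk : k ≤ 1) (heven : Even (minimalPeriod f y + k))
    (hfwd : ∀ j, Z (f (f^[j] y)) (f^[j] y) < Z (f^[j] y) (f (f^[j] y)))
    (hup : k = 1 → Even (minimalPeriod f y + p) → Z y y < c y y)
    (hdown : k = 1 → ¬Even (minimalPeriod f y + p) → 0 < Z y y) :
    SwitchingWalk (fun t : Fin (minimalPeriod f y + k) => f^[t] y) (finRotate _)
      (fun t => decide (Even ((t : ℕ) + p))) Z c := by
  have hne : ∀ j, f^[j] y ≠ f (f^[j] y) := fun j h => (hfwd j).ne (by rw [← h])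
  refine ⟨decide_even_finRotate heven p, fun t t' h => ?_, fun t h => ?_, fun t h hcol => ?_,
    fun t h hcol => ?_⟩
  · simp only [Prod.mk.injEq] at h
    rcases iterate_finRotate hk t with ⟨ht, hs⟩ | ⟨ht, h₁, h₂⟩ <;>
      rcases iterate_finRotate hk t' with ⟨ht', hs'⟩ | ⟨ht', h₁', h₂'⟩
    · exact Fin.ext (iterate_injOn_Iio_minimalPeriod ht ht' h.1)
    · exact absurd (h.1.trans (h₁'.trans (h₂'.symm.trans (h.2.symm.trans hs)))) (hne t)
    · exact absurd (h.1.symm.trans (h₁.trans (h₂.symm.trans (h.2.trans hs')))) (hne t')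
    · exact Fin.ext (ht.trans ht'.symm)
  · rcases iterate_finRotate hk t with ⟨-, hs⟩ | ⟨-, h₁, h₂⟩
    · rw [hs]
      exact hfwd t
    · exact absurd (h₁.trans h₂.symm) h
  · rcases iterate_finRotate hk t with ⟨-, hs⟩ | ⟨ht, h₁, -⟩
    · exact absurd (h.trans hs) (hne t)
    · rw [h₁]
      exact hup (by omega) (by simpa [ht] using hcol)
  · rcases iterate_finRotate hk t with ⟨-, hs⟩ | ⟨ht, h₁, -⟩
    · exact absurd (h.trans hs) (hne t)
    · rw [h₁]
      exact hdown (by omega) (by simpa [ht] using hcol)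

end Orbit

section Symmetrize

variable {V : Type*} [Fintype V] {Z c : Matrix V V ℕ}

lemma exists_asymmetric_periodic_orbit (hbal : ∀ x, ∑ y, Z x y = ∑ y, Z y x)
    (h : ∃ x y, Z y x < Z x y) :
    ∃ (f : V → V) (y : V), y ∈ periodicPts f ∧
      ∀ j, Z (f (f^[j] y)) (f^[j] y) < Z (f^[j] y) (f (f^[j] y)) := by
  obtain ⟨x₀, hx₀⟩ := h
  have : ∀ x, ∃ x', (∃ y, Z y x < Z x y) → Z x' x < Z x x' := fun x => by
    by_cases hx : ∃ y, Z y x < Z x y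
    · exact hx.imp fun x' h _ => h
    · exact ⟨x, fun h => absurd h hx⟩
  choose f hf using this
  have hiter : ∀ j, ∃ y, Z y (f^[j] x₀) < Z (f^[j] x₀) y := by
    intro j
    induction j with
    | zero => exact hx₀
    | succ j ih =>
      rw [iterate_succ_apply']
      exact exists_lt_of_lt_of_rowSum_eq_colSum (hbal _) (hf _ ih)
  obtain ⟨a, b, hab, hlt⟩ : ∃ a b, f^[a] x₀ = f^[b] x₀ ∧ a < b := by
    obtain ⟨a, b, hab, hne⟩ : ∃ a b, f^[a] x₀ = f^[b] x₀ ∧ a ≠ b := by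
      simpa [Injective] using not_injective_infinite_finite (f^[·] x₀)
    rcases hne.lt_or_gt with h | h
    exacts [⟨a, b, hab, h⟩, ⟨b, a, hab.symm, h⟩]
  refine ⟨f, f^[a] x₀, mk_mem_periodicPts (n := b - a) (by omega) ?_, fun j => ?_⟩
  · rw [IsPeriodicPt, IsFixedPt, ← iterate_add_apply, Nat.sub_add_cancel hlt.le, hab]
  · rw [← iterate_add_apply]
    exact hf _ (hiter _)

lemma exists_switchingWalk (hloop : ∀ x y, c x x = 0 → c y y = 0 → c x y = 0)
    (hZc : ∀ x y, Z x y ≤ c x y) (hbal : ∀ x, ∑ y, Z x y = ∑ y, Z y x)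
    (h : ∃ x y, Z y x < Z x y) :
    ∃ (m : ℕ) (w : Fin m → V) (col : Fin m → Bool),
      SwitchingWalk w (finRotate m) col Z c ∧ ∃ t, w t ≠ w (finRotate m t) := by
  obtain ⟨f, y₀, hy₀, hfwd₀⟩ := exists_asymmetric_periodic_orbit hbal h
  obtain ⟨y, hy, hfwd, hcy⟩ : ∃ y ∈ periodicPts f,
      (∀ j, Z (f (f^[j] y)) (f^[j] y) < Z (f^[j] y) (f (f^[j] y))) ∧ c y y ≠ 0 := by
    by_cases hc₀ : c y₀ y₀ = 0
    · refine ⟨f y₀, (mem_periodicPts.1 hy₀).elim fun n hn => ?_, fun j => ?_, fun hc₁ => ?_⟩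
      · exact mk_mem_periodicPts hn.1 hn.2.apply
      · simpa only [← iterate_succ_apply] using hfwd₀ (j + 1)
      · have := hfwd₀ 0
        have := hZc y₀ (f y₀)
        rw [hloop _ _ hc₀ hc₁] at this
        simp only [iterate_zero_apply] at *
        omega
    · exact ⟨y₀, hy₀, hfwd₀, hc₀⟩
  have hL := minimalPeriod_pos_of_mem_periodicPts hy
  obtain ⟨k, p, hk, heven, hup, hdown⟩ : ∃ k p, k ≤ 1 ∧ Even (minimalPeriod f y + k) ∧
      (k = 1 → Even (minimalPeriod f y + p) → Z y y < c y y) ∧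
      (k = 1 → ¬Even (minimalPeriod f y + p) → 0 < Z y y) := by
    rcases Nat.even_or_odd (minimalPeriod f y) with hev | hodd
    · exact ⟨0, 0, by omega, hev, by omega, by omega⟩
    rcases Nat.eq_zero_or_pos (Z y y) with hz | hz
    · exact ⟨1, 1, le_rfl, hodd.add_one, fun _ _ => hz ▸ Nat.pos_of_ne_zero hcy,
        fun _ h => absurd hodd.add_one h⟩
    · exact ⟨1, 0, le_rfl, hodd.add_one,
        fun _ h => absurd h (Nat.not_even_iff_odd.2 hodd), fun _ _ => hz⟩
  let t₀ : Fin (minimalPeriod f y + k) := ⟨0, by omega⟩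
  refine ⟨_, _, _, switchingWalk_orbit hk heven hfwd hup hdown, t₀, ?_⟩
  rcases iterate_finRotate hk t₀ with ⟨-, hs⟩ | ⟨h₀, -, -⟩
  · rw [hs]
    exact fun h => (hfwd 0).ne (by rw [← h])
  · exact absurd h₀ hL.ne

variable [DecidableEq V]

lemma exists_asymmetry_lt (hc : c.IsSymm) (hloop : ∀ x y, c x x = 0 → c y y = 0 → c x y = 0)
    (hZc : ∀ x y, Z x y ≤ c x y) (hbal : ∀ x, ∑ y, Z x y = ∑ y, Z y x)
    (h : asymmetry Z ≠ 0) :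
    ∃ Z' : Matrix V V ℕ, (∀ x y, Z' x y ≤ c x y) ∧ (∀ x, ∑ y, Z' x y = ∑ y, Z x y) ∧
      (∀ y, ∑ x, Z' x y = ∑ x, Z x y) ∧ asymmetry Z' < asymmetry Z := by
  obtain ⟨m, w, col, hw, ht⟩ :=
    exists_switchingWalk hloop hZc hbal (exists_lt_of_asymmetry_ne_zero h)
  exact ⟨_, hw.switch_le hc hZc, hw.sum_switch_right, hw.sum_switch_left,
    hw.asymmetry_switch_lt ht⟩

theorem exists_isSymm_le (hc : c.IsSymm) (hloop : ∀ x y, c x x = 0 → c y y = 0 → c x y = 0)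
    (hZc : ∀ x y, Z x y ≤ c x y) (hbal : ∀ x, ∑ y, Z x y = ∑ y, Z y x) :
    ∃ Z' : Matrix V V ℕ, (∀ x y, Z' x y ≤ c x y) ∧ Z'.IsSymm ∧
      ∀ x, ∑ y, Z' x y = ∑ y, Z x y := by
  induction hn : asymmetry Z using Nat.strong_induction_on generalizing Z with
  | _ n ih =>
    by_cases h₀ : asymmetry Z = 0
    · exact ⟨Z, hZc, isSymm_of_asymmetry_eq_zero h₀, fun _ => rfl⟩
    obtain ⟨Z', hZ'c, hrow, hcol, hlt⟩ := exists_asymmetry_lt hc hloop hZc hbal h₀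
    obtain ⟨Z'', h₁, h₂, h₃⟩ := ih _ (hn ▸ hlt) hZ'c (fun x => by rw [hrow, hcol, hbal]) rfl
    exact ⟨Z'', h₁, h₂, fun x => (h₃ x).trans (hrow x)⟩

end Symmetrize

section Fold

variable {P C : Type*}

/-- `(Bool × P) ⊕ C` with `mirror` models `Fin n` with `Fin.rev`: the pairs `{i, rev i}` are
indexed by `P`, the fixed centre (if any) by `C`. -/
def mirror : (Bool × P) ⊕ C → (Bool × P) ⊕ C
  | .inl (b, i) => .inl (!b, i)
  | .inr k => .inr k

lemma mirror_involutive : Involutive (mirror : (Bool × P) ⊕ C → _) := by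
  rintro (⟨b, i⟩ | k) <;> simp [mirror]

def foldCap : Matrix (P ⊕ C) (P ⊕ C) ℕ
  | .inl _, .inl _ => 2
  | .inr _, .inr _ => 0
  | _, _ => 1

/-- The matrix on the orbits of `mirror`. The centre's row and column only count the entries in
one half, and its diagonal entry is left out, so that the centre carries half its row sum. -/
def foldMatrix (A : Matrix ((Bool × P) ⊕ C) ((Bool × P) ⊕ C) ℕ) :
    Matrix (P ⊕ C) (P ⊕ C) ℕ
  | .inl i, .inl j => A (.inl (false, i)) (.inl (false, j)) + A (.inl (false, i)) (.inl (true, j))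
  | .inl i, .inr k => A (.inl (false, i)) (.inr k)
  | .inr k, .inl j => A (.inr k) (.inl (false, j))
  | .inr _, .inr _ => 0

/-- An entry `y ≤ 2` between two pairs is spread as `min 1 y` on the two entries within the same
half and `y - 1` on the two crossed ones. -/
def unfoldMatrix (A : Matrix ((Bool × P) ⊕ C) ((Bool × P) ⊕ C) ℕ)
    (Y : Matrix (P ⊕ C) (P ⊕ C) ℕ) : Matrix ((Bool × P) ⊕ C) ((Bool × P) ⊕ C) ℕ
  | .inl (b, i), .inl (b', j) =>
    if b = b' then min 1 (Y (.inl i) (.inl j)) else Y (.inl i) (.inl j) - 1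
  | .inl (_, i), .inr k => Y (.inl i) (.inr k)
  | .inr k, .inl (_, j) => Y (.inr k) (.inl j)
  | .inr k, .inr k' => A (.inr k) (.inr k')

lemma foldCap_isSymm : (foldCap : Matrix (P ⊕ C) (P ⊕ C) ℕ).IsSymm :=
  Matrix.IsSymm.ext <| by rintro (i | k) (j | k') <;> rfl

lemma foldCap_eq_zero {x y : P ⊕ C} (hx : foldCap x x = 0) (hy : foldCap y y = 0) :
    foldCap x y = 0 := by
  rcases x with i | k <;> rcases y with j | k' <;> simp_all [foldCap]

variable {A : Matrix ((Bool × P) ⊕ C) ((Bool × P) ⊕ C) ℕ}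

lemma foldMatrix_le_foldCap (h01 : ∀ x y, A x y ≤ 1) (v w : P ⊕ C) :
    foldMatrix A v w ≤ foldCap v w := by
  rcases v with i | k <;> rcases w with j | k' <;> simp only [foldMatrix, foldCap] <;>
    grind

variable [Fintype P] [Fintype C]

lemma sum_mirror_right (hA : ∀ x y, A (mirror x) (mirror y) = A x y) (x) :
    ∑ y, A (mirror x) y = ∑ y, A x y := by
  rw [← Equiv.sum_comp (mirror_involutive.toPerm _)]
  exact sum_congr rfl fun y _ => hA x y

lemma sum_foldMatrix_inl (i : P) :
    ∑ w, foldMatrix A (.inl i) w = ∑ y, A (.inl (false, i)) y := by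
  simp only [Fintype.sum_sum_type, Fintype.sum_prod_type, Fintype.sum_bool,
    foldMatrix, sum_add_distrib]
  ring

lemma sum_foldMatrix_inl_left (hA : ∀ x y, A (mirror x) (mirror y) = A x y) (j : P) :
    ∑ v, foldMatrix A v (.inl j) = ∑ x, A x (.inl (false, j)) := by
  have h := fun i => hA (.inl (true, i)) (.inl (false, j))
  simp only [mirror, Bool.not_true, Bool.not_false] at h
  simp only [Fintype.sum_sum_type, Fintype.sum_prod_type, Fintype.sum_bool,
    foldMatrix, sum_add_distrib, h]
  ring

lemma sum_foldMatrix_inr (hA : ∀ x y, A (mirror x) (mirror y) = A x y) (k : C) :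
    2 * ∑ w, foldMatrix A (.inr k) w + ∑ k', A (.inr k) (.inr k') = ∑ y, A (.inr k) y := by
  have h := fun i => hA (.inr k) (.inl (false, i))
  simp only [mirror, Bool.not_false] at h
  simp only [Fintype.sum_sum_type, Fintype.sum_prod_type, Fintype.sum_bool,
    foldMatrix, h, sum_const_zero]
  ring

lemma sum_foldMatrix_inr_left (hA : ∀ x y, A (mirror x) (mirror y) = A x y) (k : C) :
    2 * ∑ v, foldMatrix A v (.inr k) + ∑ k', A (.inr k') (.inr k) = ∑ x, A x (.inr k) := by
  have h := fun i => hA (.inl (false, i)) (.inr k)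
  simp only [mirror, Bool.not_false] at h
  simp only [Fintype.sum_sum_type, Fintype.sum_prod_type, Fintype.sum_bool,
    foldMatrix, h, sum_const_zero]
  ring

lemma foldMatrix_balanced [Subsingleton C] (hA : ∀ x y, A (mirror x) (mirror y) = A x y)
    (hbal : ∀ x, ∑ y, A x y = ∑ y, A y x) (w : P ⊕ C) :
    ∑ v, foldMatrix A w v = ∑ v, foldMatrix A v w := by
  rcases w with i | k
  · rw [sum_foldMatrix_inl, sum_foldMatrix_inl_left hA, hbal]
  · have hrow := sum_foldMatrix_inr hA k
    have hcol := sum_foldMatrix_inr_left hA k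
    have hdiag : ∑ k', A (.inr k) (.inr k') = ∑ k', A (.inr k') (.inr k) :=
      sum_congr rfl fun k' _ => by rw [Subsingleton.elim k' k]
    rw [hbal] at hrow
    omega

variable {Y : Matrix (P ⊕ C) (P ⊕ C) ℕ}

lemma sum_unfoldMatrix_inl (b : Bool) (i : P) :
    ∑ y, unfoldMatrix A Y (.inl (b, i)) y = ∑ w, Y (.inl i) w := by
  cases b <;>
    simp [Fintype.sum_sum_type, Fintype.sum_prod_type, unfoldMatrix, ← sum_add_distrib] <;>
    exact sum_congr rfl fun j _ => by omega

lemma sum_unfoldMatrix_inr (hY : ∀ k k', Y (.inr k) (.inr k') = 0) (k : C) :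
    ∑ y, unfoldMatrix A Y (.inr k) y =
      2 * ∑ w, Y (.inr k) w + ∑ k', A (.inr k) (.inr k') := by
  simp only [Fintype.sum_sum_type, Fintype.sum_prod_type, Fintype.sum_bool,
    unfoldMatrix, hY, sum_const_zero]
  ring

theorem exists_isSymm_mirror_invariant [Subsingleton C] (h01 : ∀ x y, A x y ≤ 1)
    (hA : ∀ x y, A (mirror x) (mirror y) = A x y) (hbal : ∀ x, ∑ y, A x y = ∑ y, A y x) :
    ∃ B : Matrix ((Bool × P) ⊕ C) ((Bool × P) ⊕ C) ℕ, (∀ x y, B x y ≤ 1) ∧ B.IsSymm ∧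
      (∀ x y, B (mirror x) (mirror y) = B x y) ∧ ∀ x, ∑ y, B x y = ∑ y, A x y := by
  classical
  obtain ⟨Y, hYc, hY, hYrow⟩ := exists_isSymm_le foldCap_isSymm (fun _ _ => foldCap_eq_zero)
    (foldMatrix_le_foldCap h01) (foldMatrix_balanced hA hbal)
  have hYinr : ∀ k k', Y (.inr k) (.inr k') = 0 := fun k k' => Nat.le_zero.1 (hYc _ _)
  refine ⟨unfoldMatrix A Y, ?_, ?_, ?_, ?_⟩
  · rintro (⟨b, i⟩ | k) (⟨b', j⟩ | k') <;> simp only [unfoldMatrix]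
    · have := hYc (.inl i) (.inl j)
      simp only [foldCap] at this
      split_ifs <;> omega
    · exact hYc (.inl i) (.inr k')
    · exact hYc (.inr k) (.inl j)
    · exact h01 _ _
  · refine Matrix.IsSymm.ext ?_
    rintro (⟨b, i⟩ | k) (⟨b', j⟩ | k') <;> simp only [unfoldMatrix, hY.apply, eq_comm]
    rw [Subsingleton.elim k k']
  · rintro (⟨b, i⟩ | k) (⟨b', j⟩ | k') <;> simp [mirror, unfoldMatrix]
  · rintro (⟨b, i⟩ | k)
    · rw [sum_unfoldMatrix_inl, hYrow, sum_foldMatrix_inl]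
      cases b
      · rfl
      · exact (sum_mirror_right hA (.inl (false, i))).symm
    · rw [sum_unfoldMatrix_inr hYinr, hYrow, sum_foldMatrix_inr hA]

end Fold

section FinRev

def finFold (n : ℕ) : (Bool × Fin (n / 2)) ⊕ Fin (n % 2) → Fin n
  | .inl (false, i) => ⟨i, by have := i.isLt; omega⟩
  | .inl (true, i) => Fin.rev ⟨i, by have := i.isLt; omega⟩
  | .inr k => ⟨n / 2, by have := k.isLt; omega⟩

lemma finFold_mirror {n : ℕ} (x : (Bool × Fin (n / 2)) ⊕ Fin (n % 2)) :
    finFold n (mirror x) = (finFold n x).rev := by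
  rcases x with ⟨_ | _, i⟩ | k
  · rfl
  · simp [finFold, mirror]
  · ext
    simp only [finFold, mirror, Fin.val_rev]
    have := k.isLt
    omega

lemma finFold_bijective (n : ℕ) : Bijective (finFold n) := by
  rw [Fintype.bijective_iff_injective_and_card]
  constructor
  · rintro (⟨_ | _, i, hi⟩ | ⟨k, hk⟩) (⟨_ | _, j, hj⟩ | ⟨k', hk'⟩) h <;>
      simp only [finFold, Fin.ext_iff, Fin.val_rev, Sum.inl.injEq, Sum.inr.injEq, Prod.mk.injEq,
        reduceCtorEq, true_and, false_and] at h ⊢ <;> omega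
  · simp only [Fintype.card_sum, Fintype.card_prod, Fintype.card_bool, Fintype.card_fin]
    omega

theorem exists_isSymm_rev_invariant {n : ℕ} {A : Matrix (Fin n) (Fin n) ℕ}
    (h01 : ∀ i j, A i j ≤ 1) (hA : ∀ i j, A i.rev j.rev = A i j)
    (hbal : ∀ i, ∑ j, A i j = ∑ j, A j i) :
    ∃ B : Matrix (Fin n) (Fin n) ℕ, (∀ i j, B i j ≤ 1) ∧ B.IsSymm ∧
      (∀ i j, B i.rev j.rev = B i j) ∧ ∀ i, ∑ j, B i j = ∑ j, A i j := by
  have : Subsingleton (Fin (n % 2)) := Fin.subsingleton_iff_le_one.2 (by omega)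
  let e := Equiv.ofBijective _ (finFold_bijective n)
  have he : ∀ i, e.symm i.rev = mirror (e.symm i) := fun i => e.symm_apply_eq.2 <| by
    change _ = finFold n _
    rw [finFold_mirror]
    exact congrArg Fin.rev (e.apply_symm_apply i).symm
  obtain ⟨B, hB01, hB, hBmirror, hBrow⟩ := exists_isSymm_mirror_invariant (A := A.submatrix e e)
    (fun _ _ => h01 _ _) (fun x y => by simp [e, finFold_mirror, hA])
    fun x => by
      simp only [Matrix.submatrix_apply, e.sum_comp (A (e x)), e.sum_comp (A · (e x)), hbal]
  refine ⟨B.submatrix e.symm e.symm, fun _ _ => hB01 _ _, hB.submatrix _,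
    fun i j => by simp only [Matrix.submatrix_apply, he, hBmirror], fun i => ?_⟩
  simp only [Matrix.submatrix_apply, e.symm.sum_comp (B (e.symm i)), hBrow, e.apply_symm_apply,
    e.sum_comp (A i)]

end FinRev

end KleinSymmetric

theorem klein_diagonal_zeroOne_iff_centrosymmetric (n : ℕ) (R : Fin n → ℕ) :
    (∃ A : Matrix (Fin n) (Fin n) ℕ,
        (∀ i j, A i j = 0 ∨ A i j = 1) ∧
        (∀ i, ∑ j, A i j = R i) ∧
        (∀ j, ∑ i, A i j = R j) ∧
        (∀ i j, A i j = A j i) ∧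
        (∀ i j, A i j = A j.rev i.rev)) ↔
    (∃ A : Matrix (Fin n) (Fin n) ℕ,
        (∀ i j, A i j = 0 ∨ A i j = 1) ∧
        (∀ i, ∑ j, A i j = R i) ∧
        (∀ j, ∑ i, A i j = R j) ∧
        (∀ i j, A i j = A i.rev j.rev)) := by
  constructor
  · rintro ⟨A, h01, hrow, hcol, hsym, hanti⟩
    exact ⟨A, h01, hrow, hcol, fun i j => (hanti i j).trans (hsym _ _)⟩
  · rintro ⟨A, h01, hrow, hcol, hcen⟩
    obtain ⟨B, hB01, hB, hBrev, hBrow⟩ := KleinSymmetric.exists_isSymm_rev_invariant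
      (fun i j => by rcases h01 i j with h | h <;> omega) (fun i j => (hcen i j).symm)
      (fun i => by rw [hrow, hcol])
    refine ⟨B, fun i j => by have := hB01 i j; omega, fun i => (hBrow i).trans (hrow i),
      fun j => ?_, fun i j => (hB.apply i j).symm,
      fun i j => ((hBrev j i).trans (hB.apply i j)).symm⟩
    rw [← hrow j, ← hBrow j]
    exact sum_congr rfl fun i _ => hB.apply j i
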